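/- arXiv:2107.02409 — 5 statements merged into one kernel-verified Lean document; each statement's English description precedes it below -/
import Mathlib

section
/- Let d and ε be real numbers with 0 < ε ≤ d. Then for every real t ≥ 0, ((d+ε)/(2ε))·exp(ε·t) − ((d−ε)/(2ε))·exp(−ε·t) − d·t − 1 ≥ 0. -/
theorem stmt_0 (d ε : ℝ) (hε : 0 < ε) (hεd : ε ≤ d) :
    ∀ t : ℝ, 0 ≤ t →
      (d + ε) / (2 * ε) * Real.exp (ε * t) - (d - ε) / (2 * ε) * Real.exp (-(ε * t))
        - d * t - 1 ≥ 0 := by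
  intro t ht
  have hx : 0 ≤ ε * t := by positivity
  have hsinh : ε * t ≤ Real.sinh (ε * t) := by
    rcases hx.eq_or_lt with h | h
    · simp [← h]
    · exact (Real.self_lt_sinh_iff.mpr h).le
  have hcosh : 1 ≤ Real.cosh (ε * t) := Real.one_le_cosh _
  rw [Real.sinh_eq] at hsinh
  rw [Real.cosh_eq] at hcosh
  have key : 0 ≤ d * ((Real.exp (ε * t) - Real.exp (-(ε * t))) / 2 - ε * t)
      + ε * ((Real.exp (ε * t) + Real.exp (-(ε * t))) / 2 - 1) := by
    have hd : 0 < d := lt_of_lt_of_le hε hεd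
    have h1 : 0 ≤ (Real.exp (ε * t) - Real.exp (-(ε * t))) / 2 - ε * t := by linarith
    have h2 : 0 ≤ (Real.exp (ε * t) + Real.exp (-(ε * t))) / 2 - 1 := by linarith
    exact add_nonneg (mul_nonneg hd.le h1) (mul_nonneg hε.le h2)
  have h2ε : (0:ℝ) < 2 * ε := by linarith
  have expand : (d + ε) / (2 * ε) * Real.exp (ε * t) - (d - ε) / (2 * ε) * Real.exp (-(ε * t))
        - d * t - 1
      = (d * ((Real.exp (ε * t) - Real.exp (-(ε * t))) / 2 - ε * t)
        + ε * ((Real.exp (ε * t) + Real.exp (-(ε * t))) / 2 - 1)) / ε := by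
    field_simp
    ring
  rw [ge_iff_le, expand]
  exact div_nonneg key hε.le
end

section
/- Let d and ε be real numbers with 0 < ε ≤ d. Then for every real t > 0, ((d+ε)/(2ε))·exp(ε·t) − ((d−ε)/(2ε))·exp(−ε·t) − d·t − 1 > 0 (strict inequality). -/
open Real

/- With `x = ε t` and `c = d / ε > 0`, the expression is
`c (sinh x - x) + (cosh x - 1)`, a sum of two positive terms for `x > 0`. -/

lemma div_mul_exp_sub_div_mul_exp_neg (d ε x : ℝ) (hε : ε ≠ 0) :
    (d + ε) / (2 * ε) * exp x - (d - ε) / (2 * ε) * exp (-x) = d / ε * sinh x + cosh x := by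
  rw [sinh_eq, cosh_eq]
  field_simp
  ring

lemma mul_add_one_lt_mul_sinh_add_cosh {c x : ℝ} (hc : 0 ≤ c) (hx : 0 < x) :
    c * x + 1 < c * sinh x + cosh x := by
  have hsinh : c * x ≤ c * sinh x := mul_le_mul_of_nonneg_left (self_lt_sinh_iff.2 hx).le hc
  have hcosh : 1 < cosh x := one_lt_cosh.2 hx.ne'
  linarith

theorem stmt_1 (d ε : ℝ) (hε : 0 < ε) (hεd : ε ≤ d) :
    ∀ t : ℝ, 0 < t →
      (d + ε) / (2 * ε) * Real.exp (ε * t) - (d - ε) / (2 * ε) * Real.exp (-(ε * t))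
        - d * t - 1 > 0 := by
  intro t ht
  have hdt : d * t = d / ε * (ε * t) := by field_simp
  have hc : 0 ≤ d / ε := div_nonneg (hε.le.trans hεd) hε.le
  rw [div_mul_exp_sub_div_mul_exp_neg d ε _ hε.ne', hdt]
  linarith [mul_add_one_lt_mul_sinh_add_cosh hc (mul_pos hε ht)]
end

section
/- Let d and ε be real numbers with 0 < ε ≤ d. Define F_old(t) = 1 − exp(−d·t)·(1 + d·t) and F_new(t) = 1 − exp(−d·t)·( ((d+ε)/(2ε))·exp(ε·t) − ((d−ε)/(2ε))·exp(−ε·t) ). Then for every real t ≥ 0, F_new(t) ≤ F_old(t). -/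
theorem stmt_5 (d ε : ℝ) (hε : 0 < ε) (hεd : ε ≤ d)
    (Fold Fnew : ℝ → ℝ)
    (hFold : ∀ t : ℝ, Fold t = 1 - Real.exp (-(d * t)) * (1 + d * t))
    (hFnew : ∀ t : ℝ, Fnew t = 1 - Real.exp (-(d * t)) *
      ((d + ε) / (2 * ε) * Real.exp (ε * t) - (d - ε) / (2 * ε) * Real.exp (-(ε * t)))) :
    ∀ t : ℝ, 0 ≤ t → Fnew t ≤ Fold t := by
  intro t ht
  rw [hFold, hFnew]
  have hE : 0 < Real.exp (-(d * t)) := Real.exp_pos _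
  have key : 1 + d * t ≤
      (d + ε) / (2 * ε) * Real.exp (ε * t) - (d - ε) / (2 * ε) * Real.exp (-(ε * t)) := by
    have hG : (d + ε) / (2 * ε) * Real.exp (ε * t) - (d - ε) / (2 * ε) * Real.exp (-(ε * t))
        = d / ε * Real.sinh (ε * t) + Real.cosh (ε * t) := by
      rw [Real.sinh_eq, Real.cosh_eq]
      field_simp
      ring
    rw [hG]
    have hs : ε * t ≤ Real.sinh (ε * t) :=
      Real.self_le_sinh_iff.mpr (mul_nonneg hε.le ht)
    have hc : 1 ≤ Real.cosh (ε * t) := Real.one_le_cosh _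
    have hd : 0 < d := lt_of_lt_of_le hε hεd
    have h1 : d * t = d / ε * (ε * t) := by field_simp
    rw [h1]
    nlinarith [div_nonneg hd.le hε.le]
  nlinarith
end

section
/- Let d and ε be real numbers with 0 < ε < d. Let X₁ and X₂ be independent random variables, each exponentially distributed with rate d, and let Y₁ and Y₂ be independent random variables exponentially distributed with rates d−ε and d+ε respectively. Then for every real t, P(Y₁ + Y₂ > t) ≥ P(X₁ + X₂ > t). -/
/-!
The law of a sum of independent variables is the convolution of their laws, and conditioning on
the first summand shows that for `X ~ Exp a`, `Y ~ Exp b` independent and `t ≥ 0`,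
`P(X + Y > t) = e^{-at} + a e^{-bt} ∫₀ᵗ e^{(b-a)x} dx`.
For `a = b = d` this is `e^{-dt} (1 + dt)`; for `a = d - ε`, `b = d + ε` it is
`e^{-dt} (cosh εt + (d/ε) sinh εt)`, so the comparison reduces to `1 ≤ cosh s` and `s ≤ sinh s`.
-/

open MeasureTheory ProbabilityTheory Real Set

theorem MeasureTheory.Measure.conv_apply_Ioi (μ ν : Measure ℝ) [SFinite ν] (t : ℝ) :
    (μ ∗ ν) (Ioi t) = ∫⁻ x, ν (Ioi (t - x)) ∂μ := by
  have hs : MeasurableSet ((fun p : ℝ × ℝ => p.1 + p.2) ⁻¹' Ioi t) :=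
    measurableSet_Ioi.preimage (by fun_prop)
  rw [Measure.conv, Measure.map_apply (by fun_prop) measurableSet_Ioi, Measure.prod_apply hs]
  refine lintegral_congr fun x => congrArg ν (Set.ext fun y => ?_)
  simp only [mem_preimage, mem_Ioi]
  constructor <;> intro h <;> linarith

theorem integral_Icc_exp_mul {c a b : ℝ} (hc : c ≠ 0) (hab : a ≤ b) :
    ∫ x in Icc a b, exp (c * x) = (exp (c * b) - exp (c * a)) / c := by
  rw [integral_Icc_eq_integral_Ioc, ← intervalIntegral.integral_of_le hab,
    intervalIntegral.integral_comp_mul_left (fun x => exp x) hc, integral_exp, smul_eq_mul,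
    inv_mul_eq_div]

namespace ProbabilityTheory

theorem expMeasure_Ioi {r : ℝ} (hr : 0 < r) (s : ℝ) :
    expMeasure r (Ioi s) = ENNReal.ofReal (exp (-(r * max s 0))) := by
  have := isProbabilityMeasure_expMeasure hr
  rw [← compl_Iic, prob_compl_eq_one_sub measurableSet_Iic, ← ofReal_cdf, cdf_expMeasure_eq hr]
  rcases le_or_gt 0 s with hs | hs
  · have : exp (-(r * s)) ≤ 1 := exp_le_one_iff.2 (by nlinarith)
    rw [if_pos hs, max_eq_left hs, ← ENNReal.ofReal_one, ← ENNReal.ofReal_sub _ (by linarith),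
      sub_sub_cancel]
  · simp [hs.not_ge, hs.le]

theorem setLIntegral_Iic_expMeasure {a b t : ℝ} (ha : 0 < a) :
    ∫⁻ x in Iic t, ENNReal.ofReal (exp (-(b * (t - x)))) ∂expMeasure a
      = ENNReal.ofReal (a * exp (-(b * t)) * ∫ x in Icc 0 t, exp ((b - a) * x)) := by
  have hdens : ∀ x, exponentialPDF a x * ENNReal.ofReal (exp (-(b * (t - x))))
      = (Ici 0).indicator (fun x => ENNReal.ofReal (a * exp (-(b * t)) * exp ((b - a) * x))) x := by
    intro x
    by_cases hx : 0 ≤ x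
    · rw [exponentialPDF_of_nonneg hx, indicator_of_mem (mem_Ici.2 hx),
        ← ENNReal.ofReal_mul (by positivity), mul_assoc, ← exp_add, mul_assoc, ← exp_add]
      ring_nf
    · rw [exponentialPDF_of_neg (not_le.1 hx), indicator_of_notMem (by simpa using hx), zero_mul]
  change ∫⁻ x in Iic t, _ ∂(volume.withDensity (exponentialPDF a)) = _
  rw [setLIntegral_withDensity_eq_setLIntegral_mul _ (f := exponentialPDF a)
      (measurable_exponentialPDFReal a).ennreal_ofReal (by fun_prop) measurableSet_Iic]
  simp_rw [Pi.mul_apply, hdens]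
  rw [lintegral_indicator measurableSet_Ici, Measure.restrict_restrict measurableSet_Ici,
    Ici_inter_Iic, ← ofReal_integral_eq_lintegral_ofReal, integral_const_mul]
  · exact (continuous_const.mul (by fun_prop)).integrableOn_Icc
  · exact ae_of_all _ fun x => by positivity

-- `max t 0` and the integral over `Icc 0 t` make the formula valid for `t < 0` too.
theorem expMeasure_conv_expMeasure_Ioi {a b : ℝ} (ha : 0 < a) (hb : 0 < b) (t : ℝ) :
    (expMeasure a ∗ expMeasure b) (Ioi t) = ENNReal.ofReal
      (exp (-(a * max t 0)) + a * exp (-(b * t)) * ∫ x in Icc 0 t, exp ((b - a) * x)) := by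
  have := isProbabilityMeasure_expMeasure hb
  have hIoi : ∫⁻ x in Ioi t, expMeasure b (Ioi (t - x)) ∂expMeasure a = expMeasure a (Ioi t) := by
    rw [← setLIntegral_one]
    refine setLIntegral_congr_fun measurableSet_Ioi fun x hx => ?_
    rw [expMeasure_Ioi hb, max_eq_right (by linarith [mem_Ioi.1 hx]), mul_zero, neg_zero, exp_zero,
      ENNReal.ofReal_one]
  have hIic : ∫⁻ x in Iic t, expMeasure b (Ioi (t - x)) ∂expMeasure a
      = ∫⁻ x in Iic t, ENNReal.ofReal (exp (-(b * (t - x)))) ∂expMeasure a := by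
    refine setLIntegral_congr_fun measurableSet_Iic fun x hx => ?_
    rw [expMeasure_Ioi hb, max_eq_left (sub_nonneg.2 hx)]
  rw [Measure.conv_apply_Ioi, ← lintegral_add_compl _ measurableSet_Iic, compl_Iic, hIoi, hIic,
    setLIntegral_Iic_expMeasure ha, expMeasure_Ioi ha, add_comm,
    ENNReal.ofReal_add (by positivity)]
  exact mul_nonneg (by positivity) (setIntegral_nonneg measurableSet_Icc fun x _ => (exp_pos _).le)

theorem expMeasure_conv_expMeasure_Ioi_of_neg {a b t : ℝ} (ha : 0 < a) (hb : 0 < b) (ht : t < 0) :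
    (expMeasure a ∗ expMeasure b) (Ioi t) = 1 := by
  simp [expMeasure_conv_expMeasure_Ioi ha hb, ht.le, Icc_eq_empty_of_lt ht]

theorem expMeasure_conv_self_Ioi {r t : ℝ} (hr : 0 < r) (ht : 0 ≤ t) :
    (expMeasure r ∗ expMeasure r) (Ioi t) = ENNReal.ofReal (exp (-(r * t)) * (1 + r * t)) := by
  rw [expMeasure_conv_expMeasure_Ioi hr hr, max_eq_left ht]
  simp only [sub_self, zero_mul, exp_zero, setIntegral_const, Real.volume_real_Icc_of_le ht,
    sub_zero, smul_eq_mul, mul_one]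
  congr 1
  ring

theorem expMeasure_conv_expMeasure_Ioi_sub_add {d ε t : ℝ} (hε : 0 < ε) (hεd : ε < d)
    (ht : 0 ≤ t) :
    (expMeasure (d - ε) ∗ expMeasure (d + ε)) (Ioi t)
      = ENNReal.ofReal (exp (-(d * t)) * (cosh (ε * t) + d / ε * sinh (ε * t))) := by
  rw [expMeasure_conv_expMeasure_Ioi (by linarith) (by linarith), max_eq_left ht,
    show d + ε - (d - ε) = 2 * ε by ring, integral_Icc_exp_mul (by positivity) ht, mul_zero,
    exp_zero, cosh_eq, sinh_eq]
  congr 1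
  have hsub : exp (-((d - ε) * t)) = exp (-(d * t)) * exp (ε * t) := by rw [← exp_add]; ring_nf
  have hadd : exp (-((d + ε) * t)) = exp (-(d * t)) * exp (-(ε * t)) := by rw [← exp_add]; ring_nf
  have htwo : exp (2 * ε * t) = exp (ε * t) * exp (ε * t) := by rw [← exp_add]; ring_nf
  have hinv : exp (ε * t) * exp (-(ε * t)) = 1 := by rw [← exp_add]; simp
  rw [hsub, hadd, htwo]
  generalize exp (ε * t) = u at hinv ⊢
  generalize exp (-(ε * t)) = v at hinv ⊢
  field_simp
  linear_combination (d - ε) * u * hinv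

theorem expMeasure_conv_self_Ioi_le {d ε : ℝ} (hε : 0 < ε) (hεd : ε < d) (t : ℝ) :
    (expMeasure d ∗ expMeasure d) (Ioi t) ≤ (expMeasure (d - ε) ∗ expMeasure (d + ε)) (Ioi t) := by
  have hd : 0 < d := hε.trans hεd
  rcases lt_or_ge t 0 with ht | ht
  · rw [expMeasure_conv_expMeasure_Ioi_of_neg hd hd ht,
      expMeasure_conv_expMeasure_Ioi_of_neg (by linarith) (by linarith) ht]
  rw [expMeasure_conv_self_Ioi hd ht, expMeasure_conv_expMeasure_Ioi_sub_add hε hεd ht]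
  refine ENNReal.ofReal_le_ofReal (mul_le_mul_of_nonneg_left ?_ (exp_pos _).le)
  have hsinh : d * t ≤ d / ε * sinh (ε * t) := by
    rw [div_mul_eq_mul_div, le_div_iff₀ hε, mul_assoc, mul_comm t]
    exact mul_le_mul_of_nonneg_left (self_le_sinh_iff.2 (by positivity)) hd.le
  linarith [one_le_cosh (ε * t)]

end ProbabilityTheory

theorem stmt_9 (d ε : ℝ) (hε : 0 < ε) (hεd : ε < d)
    {Ω : Type*} [MeasurableSpace Ω] (P : Measure Ω) [IsProbabilityMeasure P]
    (X₁ X₂ Y₁ Y₂ : Ω → ℝ)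
    (hX₁ : Measurable X₁) (hX₂ : Measurable X₂)
    (hY₁ : Measurable Y₁) (hY₂ : Measurable Y₂)
    (hXindep : IndepFun X₁ X₂ P) (hYindep : IndepFun Y₁ Y₂ P)
    (hX₁law : Measure.map X₁ P = expMeasure d)
    (hX₂law : Measure.map X₂ P = expMeasure d)
    (hY₁law : Measure.map Y₁ P = expMeasure (d - ε))
    (hY₂law : Measure.map Y₂ P = expMeasure (d + ε)) :
    ∀ t : ℝ, P {ω | t < X₁ ω + X₂ ω} ≤ P {ω | t < Y₁ ω + Y₂ ω} := by
  intro t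
  calc P {ω | t < X₁ ω + X₂ ω} = P.map (X₁ + X₂) (Ioi t) :=
        (Measure.map_apply (hX₁.add hX₂) measurableSet_Ioi).symm
    _ = (expMeasure d ∗ expMeasure d) (Ioi t) := by
        rw [hXindep.map_add_eq_map_conv_map hX₁ hX₂, hX₁law, hX₂law]
    _ ≤ (expMeasure (d - ε) ∗ expMeasure (d + ε)) (Ioi t) := expMeasure_conv_self_Ioi_le hε hεd t
    _ = P.map (Y₁ + Y₂) (Ioi t) := by
        rw [hYindep.map_add_eq_map_conv_map hY₁ hY₂, hY₁law, hY₂law]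
    _ = P {ω | t < Y₁ ω + Y₂ ω} := Measure.map_apply (hY₁.add hY₂) measurableSet_Ioi
end

section
/- Let n ≥ 1 and let r₁, …, r_n be pairwise distinct positive real numbers. Let X₁, …, X_n be independent random variables with X_i exponentially distributed with rate r_i. Then for every real t ≥ 0, P(X₁ + ⋯ + X_n ≤ t) = 1 − Σ_{i=1}^n ( Π_{j ≠ i} r_j/(r_j − r_i) ) · exp(−r_i·t). -/
open MeasureTheory ProbabilityTheory

/-!
Conditioning on the first coordinate, the CDF of `X₀ + ⋯ + X_n` is the convolution
`F_{n+1}(t) = ∫₀ᵗ r₀ e^{-r₀ x} F_n(t - x) dx`, which gives an induction on `n`. Integrating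
`F_n` termwise, each `e^{-r_k (t - x)}` produces `(e^{-r₀ t} - e^{-r_k t}) / (r_k - r₀)`; this
accounts for the factor `r₀ / (r₀ - r_k)` in the new coefficients, and the coefficient of
`e^{-r₀ t}` comes out right because the coefficients always sum to `1`: this is the value at `0`
of the Lagrange interpolant of the constant polynomial `1` at the nodes `r_i`.
-/

open Finset Real

noncomputable section

variable {ι : Type*} [Fintype ι] [DecidableEq ι]

def hypoexpCoeff (r : ι → ℝ) (i : ι) : ℝ :=
  ∏ j ∈ univ.erase i, r j / (r j - r i)

def hypoexpCDF (r : ι → ℝ) (t : ℝ) : ℝ :=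
  1 - ∑ i, hypoexpCoeff r i * exp (-(r i * t))

theorem sum_hypoexpCoeff_eq_one [Nonempty ι] {r : ι → ℝ} (hr : Function.Injective r) :
    ∑ i, hypoexpCoeff r i = 1 := by
  have h := congrArg (Polynomial.eval 0) (Lagrange.sum_basis hr.injOn univ_nonempty)
  rw [Polynomial.eval_finsetSum, Polynomial.eval_one] at h
  rw [← h]
  refine sum_congr rfl fun i _ => ?_
  rw [Lagrange.basis, Polynomial.eval_prod, hypoexpCoeff]
  refine prod_congr rfl fun j hj => ?_
  have hji : r j - r i ≠ 0 := sub_ne_zero.2 fun h => (mem_erase.1 hj).1 (hr h)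
  have hij : r i - r j ≠ 0 := fun h => hji (by linarith [sub_eq_zero.1 h])
  simp only [Lagrange.basisDivisor, Polynomial.eval_mul, Polynomial.eval_C, Polynomial.eval_sub,
    Polynomial.eval_X]
  field_simp
  ring

theorem hypoexpCoeff_succ {n : ℕ} (r : Fin (n + 1) → ℝ) (k : Fin n) :
    hypoexpCoeff r k.succ
      = r 0 / (r 0 - r k.succ) * hypoexpCoeff (fun i : Fin n => r i.succ) k := by
  have h : (univ : Finset (Fin (n + 1))).erase k.succ
      = insert 0 ((univ.erase k).map (Fin.succEmb n)) := by
    ext j; cases j using Fin.cases <;> simp [eq_comm, Fin.succ_ne_zero]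
  rw [hypoexpCoeff, h, prod_insert (by simp), prod_map]
  rfl

theorem integral_exp_mul_exp_sub {a b : ℝ} (hab : a ≠ b) (t : ℝ) :
    ∫ x in (0 : ℝ)..t, exp (-(a * x)) * exp (-(b * (t - x)))
      = (exp (-(a * t)) - exp (-(b * t))) / (b - a) := by
  have hba : b - a ≠ 0 := sub_ne_zero.2 hab.symm
  have h : ∀ x, exp (-(a * x)) * exp (-(b * (t - x))) = exp ((b - a) * x + -(b * t)) := by
    intro x
    rw [← exp_add]
    ring_nf
  simp_rw [h, intervalIntegral.integral_comp_mul_add (fun x => exp x) hba, integral_exp,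
    smul_eq_mul]
  field_simp
  ring_nf

theorem integral_mul_hypoexpCDF_sub {n : ℕ} {r : Fin (n + 1) → ℝ} (hr0 : r 0 ≠ 0)
    (hr : Function.Injective r) (t : ℝ) :
    ∫ x in (0 : ℝ)..t, r 0 * exp (-(r 0 * x)) * hypoexpCDF (fun i : Fin n => r i.succ) (t - x)
      = hypoexpCDF r t := by
  set c := hypoexpCoeff (fun i : Fin n => r i.succ)
  have hne : ∀ k : Fin n, r 0 ≠ r k.succ := fun k h => Fin.succ_ne_zero k (hr h).symm
  -- Writing `1` as `exp (-(0 * (t - x)))` lets `integral_exp_mul_exp_sub` handle the constant term.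
  have hintegrand : ∀ x, r 0 * exp (-(r 0 * x)) * hypoexpCDF (fun i : Fin n => r i.succ) (t - x)
      = r 0 * (exp (-(r 0 * x)) * exp (-(0 * (t - x))))
        - ∑ k, c k * r 0 * (exp (-(r 0 * x)) * exp (-(r k.succ * (t - x)))) := by
    intro x
    rw [zero_mul, neg_zero, exp_zero, mul_one, hypoexpCDF, mul_sub, mul_one, mul_sum]
    congr 1
    refine sum_congr rfl fun k _ => ?_
    simp only [c]
    ring
  have hterm : ∀ k : Fin n,
      c k * r 0 * ((exp (-(r 0 * t)) - exp (-(r k.succ * t))) / (r k.succ - r 0))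
        = hypoexpCoeff r k.succ * (exp (-(r k.succ * t)) - exp (-(r 0 * t))) := by
    intro k
    have h1 : r 0 - r k.succ ≠ 0 := sub_ne_zero.2 (hne k)
    have h2 : r k.succ - r 0 ≠ 0 := sub_ne_zero.2 (hne k).symm
    rw [hypoexpCoeff_succ]
    field_simp
    ring
  have hcoeff0 : hypoexpCoeff r 0 = 1 - ∑ k : Fin n, hypoexpCoeff r k.succ := by
    linarith [Fin.sum_univ_succ (hypoexpCoeff r) ▸ sum_hypoexpCoeff_eq_one hr]
  simp_rw [hintegrand]
  rw [intervalIntegral.integral_sub (Continuous.intervalIntegrable (by fun_prop) _ _)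
      (Continuous.intervalIntegrable (by fun_prop) _ _),
    intervalIntegral.integral_finsetSum fun k _ => Continuous.intervalIntegrable (by fun_prop) _ _,
    intervalIntegral.integral_const_mul, integral_exp_mul_exp_sub hr0]
  simp_rw [intervalIntegral.integral_const_mul, integral_exp_mul_exp_sub (hne _), hterm]
  rw [hypoexpCDF, Fin.sum_univ_succ, hcoeff0]
  simp only [mul_sub, sum_sub_distrib, ← sum_mul, zero_mul, neg_zero, exp_zero]
  field_simp
  ring

theorem measureReal_prod_fst_add_le {E : Type*} [MeasurableSpace E] (μ : Measure ℝ) (ν : Measure E)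
    [IsFiniteMeasure μ] [IsFiniteMeasure ν] {g : E → ℝ} (hg : Measurable g) (t : ℝ) :
    (μ.prod ν).real {p | p.1 + g p.2 ≤ t} = ∫ x, ν.real {y | g y ≤ t - x} ∂μ := by
  have hs : MeasurableSet {p : ℝ × E | p.1 + g p.2 ≤ t} :=
    measurableSet_le (by fun_prop) measurable_const
  have hslice : ∀ x, Prod.mk x ⁻¹' {p : ℝ × E | p.1 + g p.2 ≤ t} = {y | g y ≤ t - x} := by
    intro x
    ext y
    simp only [Set.mem_preimage, Set.mem_ofPred_eq, le_sub_iff_add_le']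
  rw [measureReal_def, Measure.prod_apply hs, ← integral_toReal
    (measurable_measure_prodMk_left hs).aemeasurable (ae_of_all _ fun _ => measure_lt_top _ _)]
  simp_rw [hslice, measureReal_def]

theorem measure_pi_sum_le_eq_prod {n : ℕ} (μ : Fin (n + 1) → Measure ℝ) [∀ i, SigmaFinite (μ i)]
    (t : ℝ) :
    Measure.pi μ {x | ∑ i, x i ≤ t}
      = ((μ 0).prod (Measure.pi fun i : Fin n => μ i.succ)) {p | p.1 + ∑ i, p.2 i ≤ t} := by
  have h := (measurePreserving_piFinSuccAbove μ 0).measure_preimage_equiv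
    {p : ℝ × (Fin n → ℝ) | p.1 + ∑ i, p.2 i ≤ t}
  simp only [Fin.succAbove_zero] at h
  rw [← h]
  congr 1
  ext x
  simp [MeasurableEquiv.piFinSuccAbove_apply, Fin.sum_univ_succ, Fin.tail]

theorem integral_expMeasure {r : ℝ} (hr : 0 ≤ r) (f : ℝ → ℝ) :
    ∫ x, f x ∂expMeasure r = ∫ x in Set.Ici 0, r * exp (-(r * x)) * f x := by
  have hpdf : Measurable (exponentialPDF r) := (measurable_exponentialPDFReal r).ennreal_ofReal
  rw [show expMeasure r = volume.withDensity (exponentialPDF r) from rfl,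
    integral_withDensity_eq_integral_toReal_smul hpdf (ae_of_all _ fun _ => ENNReal.ofReal_lt_top),
    ← integral_indicator measurableSet_Ici]
  congr 1
  ext x
  by_cases hx : 0 ≤ x
  · rw [Set.indicator_of_mem (Set.mem_Ici.2 hx), exponentialPDF_of_nonneg hx,
      ENNReal.toReal_ofReal (by positivity), smul_eq_mul]
  · rw [Set.indicator_of_notMem (mt Set.mem_Ici.1 hx), exponentialPDF_of_neg (not_le.1 hx),
      ENNReal.toReal_zero, zero_smul]

theorem setIntegral_Ici_mul_indicator_sub (g F : ℝ → ℝ) (t : ℝ) :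
    ∫ x in Set.Ici 0, g x * (Set.Ici 0).indicator F (t - x)
      = ∫ x in Set.Icc 0 t, g x * F (t - x) := by
  have h : ∀ x, g x * (Set.Ici 0).indicator F (t - x)
      = (Set.Iic t).indicator (fun x => g x * F (t - x)) x := by
    intro x
    simp only [Set.indicator_apply, Set.mem_Ici, Set.mem_Iic, sub_nonneg, mul_ite, mul_zero]
  simp_rw [h]
  rw [setIntegral_indicator measurableSet_Iic, Set.Ici_inter_Iic]

theorem measureReal_pi_expMeasure_sum_le {n : ℕ} {r : Fin n → ℝ} (hr : ∀ i, 0 < r i)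
    (hinj : Function.Injective r) (t : ℝ) :
    (Measure.pi fun i => expMeasure (r i)).real {x | ∑ i, x i ≤ t}
      = (Set.Ici 0).indicator (hypoexpCDF r) t := by
  induction n generalizing t with
  | zero =>
    have := fun i => isProbabilityMeasure_expMeasure (hr i)
    by_cases ht : 0 ≤ t <;> simp [ht, hypoexpCDF]
  | succ n ih =>
    have := fun i => isProbabilityMeasure_expMeasure (hr i)
    calc (Measure.pi fun i => expMeasure (r i)).real {x | ∑ i, x i ≤ t}
        = ∫ x, (Measure.pi fun i : Fin n => expMeasure (r i.succ)).real {y | ∑ i, y i ≤ t - x}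
            ∂expMeasure (r 0) := by
          rw [measureReal_def, measure_pi_sum_le_eq_prod, ← measureReal_def,
            measureReal_prod_fst_add_le _ _ (by fun_prop)]
      _ = ∫ x in Set.Icc 0 t,
            r 0 * exp (-(r 0 * x)) * hypoexpCDF (fun i : Fin n => r i.succ) (t - x) := by
          simp_rw [ih (fun i => hr i.succ) (hinj.comp (Fin.succ_injective n))]
          rw [integral_expMeasure (hr 0).le, setIntegral_Ici_mul_indicator_sub]
      _ = (Set.Ici 0).indicator (hypoexpCDF r) t := by
          by_cases ht : 0 ≤ t
          · rw [integral_Icc_eq_integral_Ioc, ← intervalIntegral.integral_of_le ht,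
              integral_mul_hypoexpCDF_sub (hr 0).ne' hinj, Set.indicator_of_mem (Set.mem_Ici.2 ht)]
          · rw [Set.Icc_eq_empty ht, Measure.restrict_empty, integral_zero_measure,
              Set.indicator_of_notMem (mt Set.mem_Ici.1 ht)]

end

theorem stmt_10_general (n : ℕ) (r : Fin n → ℝ) (hr : ∀ i, 0 < r i)
    (hdist : ∀ i j, i ≠ j → r i ≠ r j)
    {Ω : Type*} [MeasurableSpace Ω] (P : Measure Ω) [IsProbabilityMeasure P]
    (X : Fin n → Ω → ℝ) (hX : ∀ i, Measurable (X i))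
    (hindep : iIndepFun X P)
    (hlaw : ∀ i, Measure.map (X i) P = expMeasure (r i)) :
    ∀ t : ℝ, 0 ≤ t →
      (P {ω | ∑ i, X i ω ≤ t}).toReal
        = 1 - ∑ i, (∏ j ∈ Finset.univ.erase i, r j / (r j - r i)) * Real.exp (-(r i * t)) := by
  intro t ht
  have hinj : Function.Injective r := fun i j h => by_contra fun hij => hdist i j hij h
  have hjoint : P.map (fun ω i => X i ω) = Measure.pi fun i => expMeasure (r i) := by
    simp_rw [hindep.map_fun_eq_pi_map fun i => (hX i).aemeasurable, hlaw]
  calc (P {ω | ∑ i, X i ω ≤ t}).toReal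
      = (P.map fun ω i => X i ω).real {x | ∑ i, x i ≤ t} := by
        rw [map_measureReal_apply (measurable_pi_lambda _ hX)
          (measurableSet_le (by fun_prop) measurable_const)]
        rfl
    _ = hypoexpCDF r t := by
        rw [hjoint, measureReal_pi_expMeasure_sum_le hr hinj,
          Set.indicator_of_mem (Set.mem_Ici.2 ht)]

theorem stmt_10 (n : ℕ) (hn : 1 ≤ n) (r : Fin n → ℝ) (hr : ∀ i, 0 < r i)
    (hdist : ∀ i j, i ≠ j → r i ≠ r j)
    {Ω : Type*} [MeasurableSpace Ω] (P : Measure Ω) [IsProbabilityMeasure P]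
    (X : Fin n → Ω → ℝ) (hX : ∀ i, Measurable (X i))
    (hindep : iIndepFun X P)
    (hlaw : ∀ i, Measure.map (X i) P = expMeasure (r i)) :
    ∀ t : ℝ, 0 ≤ t →
      (P {ω | ∑ i, X i ω ≤ t}).toReal
        = 1 - ∑ i, (∏ j ∈ Finset.univ.erase i, r j / (r j - r i)) * Real.exp (-(r i * t)) :=
  stmt_10_general n r hr hdist P X hX hindep hlaw
end
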